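/- arXiv:2603.01675 — 3 statements merged into one kernel-verified Lean document; each statement's English description precedes it below -/
import Mathlib

section
/- Let A = (v_0, v_1, …, v_b) be an antenna in a configuration C, meaning v_0 is a leaf of the capture graph, and for each i < b the piece v_i has exactly the neighbors v_{i-1} and v_{i+1} (v_0 has only neighbor v_1). Suppose the leaf v_0 has budget b' with b' < b. Then no capturing sequence empties all of the squares v_0, …, v_b; consequently, the final square of any clearing sequence of C lies in {v_0, …, v_{b'}}. -/
/-- A configuration assigns to each square an optional budget (`none` = empty). -/
abbrev Config (V : Type) := V → Option ℕ

/-- Apply capture move `(x, y)`: the piece on `x` captures the piece on `y`,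
moving to `y` with budget decreased by one. -/
def applyMove {V : Type} [DecidableEq V] (c : Config V) (m : V × V) : Config V :=
  fun z =>
    if z = m.2 then (c m.1).map (· - 1)
    else if z = m.1 then none
    else c z

/-- A move is valid if the squares are adjacent, the source piece has positive
budget, and the target square is occupied. -/
def ValidMove {V : Type} (adj : V → V → Prop) (c : Config V) (m : V × V) : Prop :=
  adj m.1 m.2 ∧ (∃ b, c m.1 = some (b + 1)) ∧ (c m.2).isSome

def applySeq {V : Type} [DecidableEq V] (c : Config V) : List (V × V) → Config V
  | [] => c
  | m :: s => applySeq (applyMove c m) s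

def ValidSeq {V : Type} [DecidableEq V] (adj : V → V → Prop) (c : Config V) :
    List (V × V) → Prop
  | [] => True
  | m :: s => ValidMove adj c m ∧ ValidSeq adj (applyMove c m) s

/-- `ConfigLE c c'`: same pieces on the same squares, with each budget in `c'`
at least the corresponding budget in `c`. -/
def ConfigLE {V : Type} (c c' : Config V) : Prop :=
  ∀ v, ((c v).isSome ↔ (c' v).isSome) ∧
    ∀ b b', c v = some b → c' v = some b' → b ≤ b'

/-- A clearing sequence: valid and exactly one piece remains. -/
def Clears {V : Type} [DecidableEq V] (adj : V → V → Prop) (c : Config V)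
    (s : List (V × V)) : Prop :=
  ValidSeq adj c s ∧ ∃! v, (applySeq c s v).isSome

/-- `f` is the final square of sequence `s` applied to `c`. -/
def FinalSquare {V : Type} [DecidableEq V] (c : Config V) (s : List (V × V)) (f : V) : Prop :=
  (applySeq c s f).isSome ∧ ∀ v, (applySeq c s v).isSome → v = f

/-- A virtual 0-piece: occupied initially, and never moves during `s`. -/
def Virtual0 {V : Type} (c : Config V) (s : List (V × V)) (v : V) : Prop :=
  (c v).isSome ∧ ∀ m ∈ s, m.1 ≠ v

/-- A virtual 2-piece: occupied initially, and moves at some point during `s`. -/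
def Virtual2 {V : Type} (c : Config V) (s : List (V × V)) (v : V) : Prop :=
  (c v).isSome ∧ ∃ m ∈ s, m.1 = v

/-- The capture graph of a configuration: vertices are squares, with an edge
between two occupied squares whose pieces can capture each other. -/
def captureGraph {V : Type} (adj : V → V → Prop) (hs : Symmetric adj) (c : Config V) :
    SimpleGraph V where
  Adj x y := adj x y ∧ x ≠ y ∧ (c x).isSome ∧ (c y).isSome
  symm := by
    constructor
    intro x y h
    exact ⟨hs h.1, h.2.1.symm, h.2.2.2, h.2.2.1⟩
  loopless := by
    constructor
    intro x h
    exact h.2.1 rfl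

/-!
Look at the lowest occupied square `v_k` of the antenna. While its piece has budget at most
`b' - k`, it can only climb (each climb costs one unit of budget and raises `k` by one) or be
captured from `v_{k+1}`. In the latter case the capturing piece lands on `v_k` with both antenna
neighbours `v_{k-1}`, `v_{k+1}` empty; since captures never create adjacencies, it is isolated
for the rest of the play. Either way some `v_k` with `k ≤ b' < b` stays occupied.
-/

variable {V : Type}

section Moves

variable [DecidableEq V] {c : Config V} {m : V × V} {z : V}

lemma applyMove_of_ne (h₁ : z ≠ m.1) (h₂ : z ≠ m.2) : applyMove c m z = c z := by
  simp [applyMove, h₁, h₂]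

lemma applyMove_snd : applyMove c m m.2 = (c m.1).map (· - 1) := by
  simp [applyMove]

lemma applyMove_fst (h : m.1 ≠ m.2) : applyMove c m m.1 = none := by
  simp [applyMove, h]

lemma applyMove_eq_none (hm : (c m.2).isSome) (hz : c z = none) : applyMove c m z = none := by
  have h₂ : z ≠ m.2 := by rintro rfl; simp [hz] at hm
  by_cases h₁ : z = m.1
  · subst h₁; exact applyMove_fst h₂
  · rwa [applyMove_of_ne h₁ h₂]

lemma isSome_of_isSome_applyMove (hm : (c m.2).isSome) (hz : (applyMove c m z).isSome) :
    (c z).isSome := by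
  contrapose! hz
  simpa using applyMove_eq_none hm (by simpa using hz)

lemma captureGraph_applyMove_le {adj : V → V → Prop} (hs : Symmetric adj)
    (hm : (c m.2).isSome) : captureGraph adj hs (applyMove c m) ≤ captureGraph adj hs c :=
  fun _ _ ⟨hxy, hne, hx, hy⟩ =>
    ⟨hxy, hne, isSome_of_isSome_applyMove hm hx, isSome_of_isSome_applyMove hm hy⟩

end Moves

/-- For `k = 0` the alternative `x = q (k - 1)` reads `x = q 0` (truncated subtraction), which
is excluded as `G` is loopless. -/
def IsAntenna (G : SimpleGraph V) (q : ℕ → V) (b : ℕ) : Prop :=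
  ∀ k < b, ∀ x, G.Adj (q k) x → x = q (k - 1) ∨ x = q (k + 1)

lemma IsAntenna.mono {G H : SimpleGraph V} {q : ℕ → V} {b : ℕ} (hG : IsAntenna G q b)
    (h : H ≤ G) : IsAntenna H q b :=
  fun k hk x hx => hG k hk x (h hx)

lemma isAntenna_clamp {G : SimpleGraph V} {b : ℕ} {p : Fin (b + 1) → V}
    (hleaf : ∀ x, G.Adj (p 0) x → x = p 1)
    (hpath : ∀ i : Fin (b + 1), 0 < (i : ℕ) → (i : ℕ) < b →
      ∀ x, G.Adj (p i) x → x = p (i - 1) ∨ x = p (i + 1)) :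
    IsAntenna G (fun n => p (Fin.clamp n b)) b := by
  intro k hk x hx
  dsimp only at hx ⊢
  have hclamp : ∀ n ≤ b, ((Fin.clamp n b : Fin (b + 1)) : ℕ) = n := fun _ => Nat.min_eq_left
  have hi : ((Fin.clamp k b : Fin (b + 1)) : ℕ) = k := hclamp k hk.le
  rcases Nat.eq_zero_or_pos k with rfl | hk₀
  · have h0 : Fin.clamp 0 b = 0 := Fin.ext hi
    have h1 : Fin.clamp (0 + 1) b = 1 := by
      ext; rw [hclamp _ hk, Fin.val_one', Nat.mod_eq_of_lt (by omega)]
    rw [h0] at hx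
    exact Or.inr (h1 ▸ hleaf x hx)
  · convert hpath _ (by rwa [hi]) (by rwa [hi]) x hx using 3 <;> ext
    · rw [hclamp _ (by omega), Fin.coe_sub_one, if_neg (by simp [Fin.ext_iff]; omega), hi]
    · rw [hclamp _ (by omega), Fin.val_add_one, if_neg (by simp [Fin.ext_iff]; omega), hi]

def AntennaInvariant (d : Config V) (q : ℕ → V) (b' : ℕ) : Prop :=
  ∃ k ≤ b', (∀ i < k, d (q i) = none) ∧
    ∃ β, d (q k) = some β ∧ (β + k ≤ b' ∨ d (q (k + 1)) = none)

section Invariant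

variable [DecidableEq V]

lemma antennaInvariant_applyMove {adj : V → V → Prop} {hs : Symmetric adj} {d : Config V}
    {q : ℕ → V} {b b' : ℕ} (hq : IsAntenna (captureGraph adj hs d) q b) (hb : b' < b)
    (hI : AntennaInvariant d q b') {m : V × V} (hm : ValidMove adj d m) :
    AntennaInvariant (applyMove d m) q b' := by
  obtain ⟨x, y⟩ := m
  obtain ⟨hxy, ⟨γ, hx⟩, hy⟩ := hm
  obtain ⟨k, hkb', hbelow, β, hk, hcase⟩ := hI
  have hempty : ∀ {z}, d z = none → applyMove d (x, y) z = none := applyMove_eq_none hy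
  have hbelow' : ∀ i < k, applyMove d (x, y) (q i) = none := fun i hi => hempty (hbelow i hi)
  have hx' : (d x).isSome := by simp [hx]
  -- the square below `q k` is empty, except for `k = 0` where it is `q k` itself
  have hprev : ∀ z, (d z).isSome → z ≠ q k → z = q (k - 1) → False := by
    rintro z hz hne rfl
    rcases Nat.eq_zero_or_pos k with rfl | hk₀
    · exact hne rfl
    · simp [hbelow (k - 1) (by omega)] at hz
  have hnbr : ∀ z, (d z).isSome → z ≠ q k → (captureGraph adj hs d).Adj (q k) z →
      z = q (k + 1) := fun z hz hne hadj =>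
    (hq k (by omega) z hadj).resolve_left (hprev z hz hne)
  by_cases hxk : x = q k <;> by_cases hyk : y = q k
  · -- self-capture at `q k`: only the budget drops
    subst hxk; subst hyk
    rw [hk] at hx; cases hx
    refine ⟨k, hkb', hbelow', γ, by simp [applyMove_snd (m := (q k, q k)), hk], ?_⟩
    exact hcase.imp (by omega) hempty
  · -- the piece on `q k` climbs to `q (k + 1)`, paying one unit of budget
    subst hxk
    have hy1 : y = q (k + 1) := hnbr y hy hyk ⟨hxy, Ne.symm hyk, hx', hy⟩
    rw [hk] at hx; cases hx
    have hβ : γ + 1 + k ≤ b' :=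
      hcase.resolve_right fun h => by rw [← hy1] at h; simp [h] at hy
    refine ⟨k + 1, by omega, fun i hi => ?_, γ, ?_, Or.inl (by omega)⟩
    · rcases Nat.lt_succ_iff_lt_or_eq.mp hi with hi | rfl
      · exact hbelow' i hi
      · exact applyMove_fst (m := (q i, y)) (Ne.symm hyk)
    · rw [← hy1]; simp [applyMove_snd (m := (q k, y)), hk]
  · -- `q (k + 1)` captures `q k`, which then has both antenna neighbours empty forever
    subst hyk
    have hx1 : x = q (k + 1) := hnbr x hx' hxk ⟨hs hxy, Ne.symm hxk, hy, hx'⟩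
    refine ⟨k, hkb', hbelow', γ, by simp [applyMove_snd (m := (x, q k)), hx], Or.inr ?_⟩
    rw [← hx1]; exact applyMove_fst (m := (x, q k)) hxk
  · refine ⟨k, hkb', hbelow', β, by rwa [applyMove_of_ne (Ne.symm hxk) (Ne.symm hyk)], ?_⟩
    exact hcase.imp id hempty

lemma antennaInvariant_applySeq {adj : V → V → Prop} {hs : Symmetric adj} {q : ℕ → V}
    {b b' : ℕ} (hb : b' < b) :
    ∀ {s : List (V × V)} {d : Config V}, IsAntenna (captureGraph adj hs d) q b →
      AntennaInvariant d q b' → ValidSeq adj d s → AntennaInvariant (applySeq d s) q b'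
  | [], _, _, hI, _ => hI
  | m :: _, d, hq, hI, ⟨hm, hs'⟩ =>
    antennaInvariant_applySeq hb (d := applyMove d m)
      (hq.mono (captureGraph_applyMove_le hs hm.2.2)) (antennaInvariant_applyMove hq hb hI hm) hs'

end Invariant

theorem long_antenna_general {V : Type} [DecidableEq V] (adj : V → V → Prop)
    (hsymm : Symmetric adj) (c : Config V) (b b' : ℕ) (hb : b' < b)
    (p : Fin (b + 1) → V)
    (hleafBudget : c (p 0) = some b')
    (hleaf : ∀ x, (captureGraph adj hsymm c).Adj (p 0) x → x = p 1)
    (hpath : ∀ i : Fin (b + 1), 0 < (i : ℕ) → (i : ℕ) < b →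
      ∀ x, (captureGraph adj hsymm c).Adj (p i) x → x = p (i - 1) ∨ x = p (i + 1)) :
    (∀ s : List (V × V), ValidSeq adj c s → ∃ i, (applySeq c s (p i)).isSome) ∧
    ∀ s f, Clears adj c s → FinalSquare c s f →
      ∃ i : Fin (b + 1), (i : ℕ) ≤ b' ∧ f = p i := by
  have hinit : AntennaInvariant c (fun n => p (Fin.clamp n b)) b' :=
    ⟨0, Nat.zero_le _, fun _ h => absurd h (Nat.not_lt_zero _), b', hleafBudget, Or.inl le_rfl⟩
  have hfinal : ∀ s, ValidSeq adj c s →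
      ∃ i : Fin (b + 1), (i : ℕ) ≤ b' ∧ (applySeq c s (p i)).isSome := by
    intro s hs
    obtain ⟨k, hk, -, β, hβ, -⟩ :=
      antennaInvariant_applySeq hb (isAntenna_clamp hleaf hpath) hinit hs
    exact ⟨Fin.clamp k b, min_le_left _ _ |>.trans hk, by simp [hβ]⟩
  refine ⟨fun s hs => ?_, fun s f hs hf => ?_⟩
  · obtain ⟨i, -, hi⟩ := hfinal s hs
    exact ⟨i, hi⟩
  · obtain ⟨i, hi, hocc⟩ := hfinal s hs.1
    exact ⟨i, hi, (hf.2 _ hocc).symm⟩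

/-- **Long antenna observation.** Let `A = (v₀, …, v_b)` be an antenna in a
configuration `C`: `v₀` is a leaf of the capture graph with unique neighbor
`v₁`, and each interior `vᵢ` (for `0 < i < b`) has exactly the neighbors
`v_{i-1}` and `v_{i+1}`. Suppose the leaf `v₀` has budget `b' < b`. Then no
valid capturing sequence empties all the squares `v₀, …, v_b`; consequently, the
final square of any clearing sequence of `C` lies in `{v₀, …, v_{b'}}`. -/
theorem long_antenna {V : Type} [DecidableEq V] (adj : V → V → Prop)
    (hsymm : Symmetric adj) (c : Config V) (b b' : ℕ) (hb : b' < b)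
    (p : Fin (b + 1) → V) (hinj : Function.Injective p)
    (hocc : ∀ i, (c (p i)).isSome)
    (hleafBudget : c (p 0) = some b')
    (hleaf : ∀ x, (captureGraph adj hsymm c).Adj (p 0) x → x = p 1)
    (hpath : ∀ i : Fin (b + 1), 0 < (i : ℕ) → (i : ℕ) < b →
      ∀ x, (captureGraph adj hsymm c).Adj (p i) x → x = p (i - 1) ∨ x = p (i + 1))
    (hadj : ∀ i : Fin (b + 1), (i : ℕ) < b → adj (p i) (p (i + 1))) :
    (∀ s : List (V × V), ValidSeq adj c s → ∃ i, (applySeq c s (p i)).isSome) ∧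
    ∀ s f, Clears adj c s → FinalSquare c s f →
      ∃ i : Fin (b + 1), (i : ℕ) ≤ b' ∧ f = p i :=
  long_antenna_general adj hsymm c b b' hb p hleafBudget hleaf hpath
end

section
/- The knight 1-TEST gadget — an input wire column attached to a path of three additional knights all with budget 2 — can be reduced to a single piece if the input signal is (1,0), and cannot be reduced to a single piece if the input signal is (0,0). -/
/-! ## The knight 1-TEST gadget
Vertices `0 = A, 1 = B, 2 = C, 3 = D, 4 = E, 5 = F, 6 = G` with edges
`A–C, B–C, B–D, C–E, E–F, F–G`. -/

def testAdjList : List (Fin 7 × Fin 7) := [(0, 2), (1, 2), (1, 3), (2, 4), (4, 5), (5, 6)]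

def testAdj (a b : Fin 7) : Prop := (a, b) ∈ testAdjList ∨ (b, a) ∈ testAdjList

/-- The 1-TEST gadget with input signal `(x, 0)`: the outer input knight `A` is
present (budget 2) iff `x`, the inner input knight `B` has budget 0, and the
knights `C, D, E, F, G` all have budget 2. -/
def testConfig (x : Bool) : Config (Fin 7) := fun v =>
  if v = 0 then (if x then some 2 else none)
  else if v = 1 then some 0
  else some 2

/-!
For the input `(1,0)` an explicit sequence of captures clears the gadget onto `E`.

For `(0,0)` the occupied squares lie on the path `D – B – C – E – F – G`. A vacated square is
never refilled, so reading a clearing backwards from its single survivor shows that the occupied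
squares always form a segment of the path and that every capture is made by an end piece onto
its neighbour. Hence the budgets of the two end pieces always cover the length of the segment.
Initially that length is 5, while the end knights `D` and `G` have budget 2 each.
-/

section LinearLayout

variable {V : Type}

def occupied (c : Config V) : Set V := {v | (c v).isSome}

def budget (c : Config V) (v : V) : ℕ := (c v).getD 0

section Moves

variable [DecidableEq V] {c : Config V} {x y : V}

lemma occupied_applyMove (hxy : x ≠ y) (hx : x ∈ occupied c) (hy : y ∈ occupied c) :
    occupied (applyMove c (x, y)) = occupied c \ {x} := by
  ext v
  simp only [occupied, applyMove, Set.mem_ofPred_eq, Set.mem_sdiff, Set.mem_singleton_iff] at *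
  split_ifs with hvy hvx
  · subst hvy; simp [hx, hy, Ne.symm hxy]
  · simp [hvx]
  · simp [hvx]

lemma occupied_applyMove_subset (hy : y ∈ occupied c) :
    occupied (applyMove c (x, y)) ⊆ occupied c := by
  intro v hv
  by_cases hvy : v = y
  · exact hvy ▸ hy
  · by_cases hvx : v = x <;> simp_all [occupied, applyMove]

lemma budget_applyMove_snd : budget (applyMove c (x, y)) y = budget c x - 1 := by
  cases h : c x <;> simp [budget, applyMove, h]

lemma budget_applyMove_of_ne {v : V} (hvx : v ≠ x) (hvy : v ≠ y) :
    budget (applyMove c (x, y)) v = budget c v := by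
  simp [budget, applyMove, hvx, hvy]

end Moves

structure IsLinearLayout (adj : V → V → Prop) (pos : V → ℤ) (s : Set V) : Prop where
  injOn : Set.InjOn pos s
  abs_sub_eq_one : ∀ x ∈ s, ∀ y ∈ s, adj x y → |pos x - pos y| = 1

lemma IsLinearLayout.mono {adj : V → V → Prop} {pos : V → ℤ} {s t : Set V}
    (h : IsLinearLayout adj pos s) (hts : t ⊆ s) : IsLinearLayout adj pos t :=
  ⟨h.injOn.mono hts, fun x hx y hy => h.abs_sub_eq_one x (hts hx) y (hts hy)⟩

def EndsCanMeet (pos : V → ℤ) (c : Config V) : Prop :=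
  ∃ u ∈ occupied c, ∃ w ∈ occupied c,
    pos '' occupied c = Set.Icc (pos u) (pos w) ∧ pos w - pos u ≤ budget c u + budget c w

lemma endsCanMeet_of_occupied_eq_singleton {pos : V → ℤ} {c : Config V} {v : V}
    (h : occupied c = {v}) : EndsCanMeet pos c :=
  ⟨v, h ▸ rfl, v, h ▸ rfl, by simp [h], by simp⟩

variable [DecidableEq V] {adj : V → V → Prop} {pos : V → ℤ}

/-- The vacated square is adjacent to the segment of the remaining pieces but lies outside it,
so the mover was an end piece that captured the end of that segment. -/
lemma EndsCanMeet.of_applyMove {c : Config V} {x y : V}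
    (hlay : IsLinearLayout adj pos (occupied c)) (hm : ValidMove adj c (x, y))
    (h : EndsCanMeet pos (applyMove c (x, y))) : EndsCanMeet pos c := by
  obtain ⟨hadj, ⟨b, hb⟩, hyocc⟩ := hm
  have hxocc : x ∈ occupied c := by simp [occupied, hb]
  have hdist := hlay.abs_sub_eq_one x hxocc y hyocc hadj
  have hxy : x ≠ y := by rintro rfl; simp at hdist
  have hocc := occupied_applyMove hxy hxocc hyocc
  have hbx : budget c x = b + 1 := by simp [budget, hb]
  have hby : budget (applyMove c (x, y)) y = b := by rw [budget_applyMove_snd, hbx]; rfl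
  obtain ⟨u, hu, w, hw, himage, hbudget⟩ := h
  have hsub := occupied_applyMove_subset (x := x) hyocc
  have hxu : u ≠ x := by rintro rfl; simp [hocc] at hu
  have hxw : w ≠ x := by rintro rfl; simp [hocc] at hw
  have hposx : pos x ∉ Set.Icc (pos u) (pos w) := by
    rw [← himage]
    rintro ⟨v, hv, hvx⟩
    have := hlay.injOn (hsub hv) hxocc hvx
    simp [hocc, this] at hv
  have hy : y ∈ occupied (applyMove c (x, y)) := hocc ▸ ⟨hyocc, hxy.symm⟩
  have hposy : pos y ∈ Set.Icc (pos u) (pos w) := himage ▸ ⟨y, hy, rfl⟩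
  have hinsert : pos '' occupied c = insert (pos x) (Set.Icc (pos u) (pos w)) := by
    rw [← himage, ← Set.image_insert_eq, hocc, Set.insert_sdiff_singleton,
      Set.insert_eq_of_mem hxocc]
  simp only [Set.mem_Icc, not_and_or, not_le] at hposx hposy
  rcases (abs_eq zero_le_one).1 hdist with hright | hleft
  · obtain rfl : y = w := hlay.injOn (hsub hy) (hsub hw) (by omega)
    refine ⟨u, hsub hu, x, hxocc, ?_, ?_⟩
    · rw [hinsert, show pos x = pos y + 1 by omega, Set.insert_Icc_right_eq_Icc_add_one (by omega)]
    · by_cases huy : u = y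
      · subst huy; omega
      · have := budget_applyMove_of_ne (c := c) hxu huy; omega
  · obtain rfl : y = u := hlay.injOn (hsub hy) (hsub hu) (by omega)
    refine ⟨x, hxocc, w, hsub hw, ?_, ?_⟩
    · rw [hinsert, show pos y = pos x + 1 by omega, Set.insert_Icc_add_one_left_eq_Icc (by omega)]
    · by_cases hwy : w = y
      · subst hwy; omega
      · have := budget_applyMove_of_ne (c := c) hxw hwy; omega

theorem endsCanMeet_of_clears {c : Config V} {s : List (V × V)}
    (hlay : IsLinearLayout adj pos (occupied c)) (hs : Clears adj c s) : EndsCanMeet pos c := by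
  induction s generalizing c with
  | nil =>
    obtain ⟨v, hv, huniq⟩ := hs.2
    exact endsCanMeet_of_occupied_eq_singleton
      (Set.eq_singleton_iff_unique_mem.2 ⟨hv, fun u hu => huniq u hu⟩)
  | cons m s ih =>
    obtain ⟨⟨hm, hrest⟩, hone⟩ := hs
    obtain ⟨x, y⟩ := m
    exact (ih (hlay.mono (occupied_applyMove_subset hm.2.2)) ⟨hrest, hone⟩).of_applyMove hlay hm

end LinearLayout

/-- Positions along the path `D – B – C – E – F – G`; the absent knight `A` is placed arbitrarily. -/
def gadgetPos : Fin 7 → ℤ := ![0, 1, 2, 0, 3, 4, 5]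

lemma isLinearLayout_gadgetPos :
    IsLinearLayout testAdj gadgetPos (occupied (testConfig false)) where
  injOn := by
    intro a ha b hb
    revert a b
    simp only [occupied, Set.mem_ofPred_eq]
    decide
  abs_sub_eq_one := by
    simp only [occupied, Set.mem_ofPred_eq, testAdj, testAdjList]
    decide

lemma budget_testConfig_le_two (x : Bool) (v : Fin 7) : budget (testConfig x) v ≤ 2 := by
  revert x v
  decide

/-- **The 1-TEST gadget.** It can be reduced to a single piece if the input
signal is `(1,0)`, and cannot be reduced to a single piece if the input signal
is `(0,0)`. -/
theorem knight_one_test :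
    (∃ s : List (Fin 7 × Fin 7), Clears testAdj (testConfig true) s) ∧
    ¬ ∃ s : List (Fin 7 × Fin 7), Clears testAdj (testConfig false) s := by
  constructor
  · refine ⟨[(3, 1), (1, 2), (0, 2), (2, 4), (6, 5), (5, 4)], ?_, 4, ?_, ?_⟩
    · simp [ValidSeq, ValidMove, applyMove, testConfig, testAdj, testAdjList]
    · decide
    · decide
  · rintro ⟨s, hs⟩
    obtain ⟨u, -, w, -, himage, hbudget⟩ := endsCanMeet_of_clears isLinearLayout_gadgetPos hs
    have hD : (0 : ℤ) ∈ Set.Icc (gadgetPos u) (gadgetPos w) := himage ▸ ⟨3, rfl, rfl⟩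
    have hG : (5 : ℤ) ∈ Set.Icc (gadgetPos u) (gadgetPos w) := himage ▸ ⟨6, rfl, rfl⟩
    have hu := budget_testConfig_le_two false u
    have hw := budget_testConfig_le_two false w
    simp only [Set.mem_Icc] at hD hG
    omega
end

section
/- The composite AND gadget semantics are correct: given inputs (x,0), (y,0) ∈ {(0,0),(1,0)}, composing the operations Flip: (x,0) ↦ (0,x), component-wise max with the other input, and the constraint path where signal (1,1) passes through −(1,0) then −(0,1) to give (0,0) (any other value gives an error), with the asymmetric value producer outputting either (1,1) on the left and (0,0) on the right or (0,0) on the left and (1,0) on the right (constrained so the left output must match the signal absorbed by the decrement path), yields overall output (1,0) if x = y = 1 and (0,0) otherwise. -/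
/-- Signals of the knight reduction: pairs in `{0,1}²`, with true = `(1,0)`,
false = `(0,0)`, and auxiliary values `(0,1)` and `(1,1)`. -/
abbrev Sig := Bool × Bool

/-- Component-wise maximum of signals. -/
def smax (a b : Sig) : Sig := (a.1 || b.1, a.2 || b.2)

/-- The Flip operation swaps the two components; on inputs `(x, 0)` it realizes
`(x, 0) ↦ (0, x)`. -/
def sflip (a : Sig) : Sig := (a.2, a.1)

/-- The `−(1,0)` Decrement: maps `(1, y)` to `(0, y)` and errors on `(0, y)`. -/
def dec10 (a : Sig) : Option Sig := if a.1 then some (false, a.2) else none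

/-- The `−(0,1)` Decrement: maps `(x, 1)` to `(x, 0)` and errors on `(x, 0)`. -/
def dec01 (a : Sig) : Option Sig := if a.2 then some (a.1, false) else none

/-- A successful run of the composite AND gadget on inputs `(x, 0)`, `(y, 0)`
with asymmetric-producer outputs `(L, R)` and overall output `out`: the
producer outputs `((1,1), (0,0))` or `((0,0), (1,0))`; the inputs are combined
to `max((x,0), Flip((y,0)))`, then maxed with `L` and passed through the
decrement path `−(1,0); −(0,1)`, which must succeed with result `(0,0)`; the
overall output is the max of that `(0,0)` with `R`. -/
def AndRun (x y : Bool) (L R out : Sig) : Prop :=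
  ((L = (true, true) ∧ R = (false, false)) ∨
    (L = (false, false) ∧ R = (true, false))) ∧
  (dec10 (smax (smax (x, false) (sflip (y, false))) L)).bind dec01 =
    some (false, false) ∧
  out = smax (false, false) R

/-- **Correctness of the composite AND gadget.** The computation succeeds with
output `(1,0)` iff `x = y = 1` (choosing `(L,R) = ((0,0),(1,0))`); otherwise it
succeeds only with `(L,R) = ((1,1),(0,0))`, giving output `(0,0)`. -/
theorem and_gadget_semantics (x y : Bool) :
    ((∃ L R : Sig, AndRun x y L R (true, false)) ↔ (x = true ∧ y = true)) ∧
    (¬ (x = true ∧ y = true) →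
      ∀ L R out : Sig, AndRun x y L R out →
        L = (true, true) ∧ R = (false, false) ∧ out = (false, false)) := by
  constructor
  · constructor
    · rintro ⟨L, R, h⟩
      rcases h with ⟨hLR | hLR, hd, _⟩ <;> obtain ⟨hL, hR⟩ := hLR <;> subst hL <;> subst hR <;>
        cases x <;> cases y <;> simp_all [AndRun, dec10, dec01, smax, sflip]
    · rintro ⟨hx, hy⟩; subst hx; subst hy
      exact ⟨(false,false), (true,false), Or.inr ⟨rfl, rfl⟩, by decide, by decide⟩
  · intro h L R out hr
    rcases hr with ⟨hLR | hLR, hd, hout⟩ <;> obtain ⟨hL, hR⟩ := hLR <;> subst hL <;> subst hR <;>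
      cases x <;> cases y <;> simp_all [dec10, dec01, smax, sflip]
end
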